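/- Let p be a prime, d ≥ 1, and k₁, …, k_d integers. Let U_a be the 2d×2d block-diagonal complex matrix with 2×2 diagonal blocks A_{k₁}, …, A_{k_d}, and let u ∈ ℂ^{2d} be the unit vector (1/√d) · Σ_{j=1}^{d} f_j, where f_j denotes the standard basis vector indexing the first coordinate of the j-th block. Then for every natural number m, ⟨u, U_a^m u⟩ = (1/d) · Σ_{j=1}^{d} cos(2π k_j m / p). Consequently the 2d-state QFA M_K, which runs M_{k₁}, …, M_{k_d} in equal superposition and applies the inverse of the initial superposition transformation at the end, accepts a^m with probability ((1/d) Σ_{j=1}^{d} cos(2π k_j m / p))². -/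
import Mathlib
set_option maxRecDepth 4000

open Matrix

/-- The 2×2 real rotation matrix `A_k` by angle `2kπ/p`, the transition matrix of the
two-state QFA `M_k` for the language `MOD_p` on input symbol `a`. -/
noncomputable def Ak (p : ℕ) (k : ℤ) : Matrix (Fin 2) (Fin 2) ℝ :=
  !![Real.cos (2 * k * Real.pi / p), -Real.sin (2 * k * Real.pi / p);
     Real.sin (2 * k * Real.pi / p),  Real.cos (2 * k * Real.pi / p)]

/-- The block-diagonal uniformly controlled rotation `U_a = A_{k₁} ⊕ ⋯ ⊕ A_{k_d}`,
as a `2d × 2d` complex matrix indexed by pairs `(j, s)` with `j : Fin d`, `s : Fin 2`. -/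
noncomputable def Ua (p : ℕ) (d : ℕ) (k : Fin d → ℤ) :
    Matrix (Fin d × Fin 2) (Fin d × Fin 2) ℂ :=
  Matrix.of fun x y => if x.1 = y.1 then ((Ak p (k x.1)) x.2 y.2 : ℂ) else 0

/-- The equal-superposition unit vector `u = (1/√d) Σⱼ fⱼ`, where `fⱼ` indexes the
first coordinate of the `j`-th block. -/
noncomputable def uVec (d : ℕ) : Fin d × Fin 2 → ℂ :=
  fun x => if x.2 = 0 then ((1 / Real.sqrt d : ℝ) : ℂ) else 0

noncomputable def Rot (θ : ℝ) : Matrix (Fin 2) (Fin 2) ℝ :=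
  !![Real.cos θ, -Real.sin θ; Real.sin θ, Real.cos θ]

lemma Rot_mul (θ φ : ℝ) : Rot θ * Rot φ = Rot (θ + φ) := by
  ext i j
  fin_cases i <;> fin_cases j <;>
    simp [Rot, Matrix.mul_apply, Fin.sum_univ_two, Real.cos_add, Real.sin_add] <;> ring

lemma Ak_eq_Rot (p : ℕ) (k : ℤ) : Ak p k = Rot (2 * k * Real.pi / p) := rfl

lemma Ua_pow (p d : ℕ) (k : Fin d → ℤ) (m : ℕ) :
    Ua p d k ^ m = Matrix.of fun x y =>
      if x.1 = y.1 then ((Rot (m * (2 * (k x.1) * Real.pi / p)) x.2 y.2 : ℝ) : ℂ) else 0 := by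
  induction m with
  | zero =>
    ext ⟨j, s⟩ ⟨j', t⟩
    by_cases h : j = j'
    · subst h
      fin_cases s <;> fin_cases t <;>
        simp [Matrix.one_apply, Prod.ext_iff, Rot]
    · simp [Matrix.one_apply, Prod.ext_iff, h]
  | succ n ih =>
    rw [pow_succ, ih]
    ext ⟨j, s⟩ ⟨j', t⟩
    simp only [Matrix.mul_apply, Fintype.sum_prod_type, Matrix.of_apply, Ua]
    by_cases h : j = j'
    · subst h
      have key : ∀ u v : Fin 2,
          (Rot (n * (2 * (k j) * Real.pi / p)) u v : ℂ) *
            ((Ak p (k j)) v t : ℂ) =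
          ((Rot (n * (2 * (k j) * Real.pi / p)) u v * (Ak p (k j)) v t : ℝ) : ℂ) := by
        intro u v; push_cast; ring
      simp only [ite_mul, mul_ite, mul_zero, zero_mul]
      rw [Finset.sum_eq_single j]
      · have h2 : ((Rot (n * (2 * (k j) * Real.pi / p)) * Ak p (k j)) s t : ℝ) =
            Rot ((n+1 : ℕ) * (2 * (k j) * Real.pi / p)) s t := by
          rw [Ak_eq_Rot, Rot_mul]; push_cast; ring_nf
        simp only [if_pos rfl, if_true]
        calc ∑ v : Fin 2, ((Rot (n * (2 * (k j) * Real.pi / p)) s v : ℂ)) * ((Ak p (k j)) v t : ℂ)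
            = ∑ v : Fin 2, ((Rot (n * (2 * (k j) * Real.pi / p)) s v * (Ak p (k j)) v t : ℝ) : ℂ) := by
              exact Finset.sum_congr rfl fun v _ => key s v
          _ = (((Rot (n * (2 * (k j) * Real.pi / p)) * Ak p (k j)) s t : ℝ) : ℂ) := by
              rw [Matrix.mul_apply]; exact (Complex.ofReal_sum _ _).symm
          _ = _ := by rw [h2]
      · intro b _ hb
        simp [Ne.symm hb]
      · simp
    · simp only [ite_mul, mul_ite, mul_zero, zero_mul, if_neg h]
      rw [Finset.sum_eq_zero]
      intro b _
      by_cases hb : j = b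
      · subst hb; simp [h]
      · simp [hb]

lemma amp_eq (p : ℕ) (d : ℕ) (hd : 1 ≤ d) (k : Fin d → ℤ)
    (m : ℕ) :
    star (uVec d) ⬝ᵥ (Ua p d k ^ m) *ᵥ uVec d =
      (((1 / d) * ∑ j : Fin d, Real.cos (2 * Real.pi * (k j) * m / p) : ℝ) : ℂ) := by
  rw [Ua_pow]
  simp only [dotProduct, mulVec, dotProduct, uVec, Pi.star_apply, Fintype.sum_prod_type,
    Fin.sum_univ_two, Matrix.of_apply]
  norm_num [Rot]
  have hd0 : (0:ℝ) < (d:ℝ) := by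
    have : 0 < d := hd
    exact_mod_cast this
  have hne : ((Real.sqrt d : ℝ) : ℂ) ≠ 0 :=
    Complex.ofReal_ne_zero.mpr (by positivity)
  have hs : ((Real.sqrt d : ℝ) : ℂ) * ((Real.sqrt d : ℝ) : ℂ) = (d : ℂ) := by
    rw [← Complex.ofReal_mul, Real.mul_self_sqrt hd0.le]
    simp
  rw [Finset.mul_sum]
  refine Finset.sum_congr rfl fun x _ => ?_
  rw [show ((m : ℂ) * (2 * (k x : ℂ) * (Real.pi : ℂ) / (p : ℂ))) = 2 * (Real.pi : ℂ) * (k x : ℂ) * (m : ℂ) / (p : ℂ) by ring]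
  rw [← hs, mul_inv]
  ring


/-- The amplitude `⟨u, U_a^m u⟩` equals `(1/d) Σⱼ cos(2π kⱼ m / p)`; consequently the
QFA `M_K` accepts `a^m` with probability `((1/d) Σⱼ cos(2π kⱼ m / p))²`. -/
theorem ua_pow_amplitude (p : ℕ) (hp : p.Prime) (d : ℕ) (hd : 1 ≤ d) (k : Fin d → ℤ)
    (m : ℕ) :
    star (uVec d) ⬝ᵥ (Ua p d k ^ m) *ᵥ uVec d =
      (((1 / d) * ∑ j : Fin d, Real.cos (2 * Real.pi * (k j) * m / p) : ℝ) : ℂ) ∧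
    Complex.normSq (star (uVec d) ⬝ᵥ (Ua p d k ^ m) *ᵥ uVec d) =
      ((1 / d) * ∑ j : Fin d, Real.cos (2 * Real.pi * (k j) * m / p)) ^ 2 := by
  refine ⟨amp_eq p d hd k m, ?_⟩
  rw [amp_eq p d hd k m, Complex.normSq_ofReal, sq]
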